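/- Let p ≥ q ≥ 1 be integers, n = p+q, and t ∈ ℝ^q. Then the matrix exponential of H_t equals the block matrix [[C_p(t), S_{p×q}(t)],[S_{q×p}(t), C_q(t)]], where C_p(t) ∈ M_p(ℝ) is the diagonal matrix with diagonal entries cosh t₁, …, cosh t_q, 1, …, 1; C_q(t) ∈ M_q(ℝ) is the diagonal matrix with entries cosh t₁, …, cosh t_q; S_{p×q}(t) ∈ M_{p,q}(ℝ) has (r,r) entry sinh t_r for 1 ≤ r ≤ q and all other entries 0; and S_{q×p}(t) is its transpose. -/

import Mathlib

/-
Write `D` for the diagonal matrix with entries `t₁, …, t_q, 0, …, 0, t₁, …, t_q` and `P` for the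
symmetric partial permutation matrix exchanging the coordinates `r` and `p + r` (`r ≤ q`).
Then `H_t = D P`, and since `q ≤ p` every coordinate of the second block has a partner, so
`H_t² = D²`. Hence `H_t^(2k) = D^(2k)` and `H_t^(2k+1) = D^(2k+1) P`, and the exponential series
splits into `cosh D + sinh D · P`, which is the claimed block matrix.
-/

open Matrix

namespace stmt19

variable (p q : ℕ)

/-- The matrix `H_t = [[0, t_{p×q}],[t_{q×p}, 0]] ∈ M_{p+q}(ℝ)` for `t ∈ ℝ^q`. -/
def Ht (t : Fin q → ℝ) : Matrix (Fin p ⊕ Fin q) (Fin p ⊕ Fin q) ℝ :=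
  Matrix.fromBlocks 0
    (Matrix.of fun (i : Fin p) (j : Fin q) => if (i : ℕ) = (j : ℕ) then t j else 0)
    (Matrix.of fun (i : Fin q) (j : Fin p) => if (i : ℕ) = (j : ℕ) then t i else 0) 0

/-- `C_p(t)`: the diagonal `p×p` matrix with entries `cosh t₁, …, cosh t_q, 1, …, 1`. -/
noncomputable def Cp (t : Fin q → ℝ) : Matrix (Fin p) (Fin p) ℝ :=
  Matrix.diagonal fun i : Fin p => if h : (i : ℕ) < q then Real.cosh (t ⟨(i : ℕ), h⟩) else 1

/-- `C_q(t)`: the diagonal `q×q` matrix with entries `cosh t₁, …, cosh t_q`. -/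
noncomputable def Cq (t : Fin q → ℝ) : Matrix (Fin q) (Fin q) ℝ :=
  Matrix.diagonal fun j : Fin q => Real.cosh (t j)

/-- `S_{p×q}(t)`: the `p×q` matrix with `(r,r)` entry `sinh t_r` and other entries `0`. -/
noncomputable def Spq (t : Fin q → ℝ) : Matrix (Fin p) (Fin q) ℝ :=
  Matrix.of fun (i : Fin p) (j : Fin q) => if (i : ℕ) = (j : ℕ) then Real.sinh (t j) else 0

end stmt19

open scoped Nat

theorem Fin.sum_ite_val_eq {M : Type*} [AddCommMonoid M] {q : ℕ} (m : ℕ) (f : Fin q → M) :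
    ∑ j : Fin q, (if m = (j : ℕ) then f j else 0) = if h : m < q then f ⟨m, h⟩ else 0 := by
  split_ifs with h
  · rw [Finset.sum_eq_single ⟨m, h⟩ (fun j _ hj => if_neg fun e => hj (Fin.ext e.symm)) (by simp)]
    simp
  · exact Finset.sum_eq_zero fun j _ => if_neg fun (e : m = j) => h (e ▸ j.isLt)

namespace Matrix

variable {n : Type*} [Fintype n] [DecidableEq n]

theorem exp_eq_diagonal_cosh_add_diagonal_sinh_mul {H c : Matrix n n ℝ} {d : n → ℝ}
    (hH : H * H = diagonal (d ^ 2)) (hc : H = diagonal d * c) :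
    NormedSpace.exp H = diagonal (Real.cosh ∘ d) + diagonal (Real.sinh ∘ d) * c := by
  have pow_even (k : ℕ) : H ^ (2 * k) = diagonal (d ^ (2 * k)) := by
    rw [pow_mul, sq, hH, diagonal_pow, pow_mul]
  have pow_odd (k : ℕ) : H ^ (2 * k + 1) = diagonal (d ^ (2 * k + 1)) * c := by
    rw [pow_succ, pow_even, hc, ← Matrix.mul_assoc, diagonal_mul_diagonal, pow_succ]
    rfl
  have hasSum_even : HasSum (fun k : ℕ => ((2 * k)! : ℝ)⁻¹ • H ^ (2 * k))
      (diagonal (Real.cosh ∘ d)) := by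
    simp_rw [pow_even, ← diagonal_smul]
    refine HasSum.matrix_diagonal (Pi.hasSum.mpr fun i => ?_)
    simpa [inv_mul_eq_div] using Real.hasSum_cosh (d i)
  have hasSum_odd : HasSum (fun k : ℕ => ((2 * k + 1)! : ℝ)⁻¹ • H ^ (2 * k + 1))
      (diagonal (Real.sinh ∘ d) * c) := by
    simp_rw [pow_odd, ← Matrix.smul_mul, ← diagonal_smul]
    refine HasSum.mul_right c (HasSum.matrix_diagonal (Pi.hasSum.mpr fun i => ?_))
    simpa [inv_mul_eq_div] using Real.hasSum_sinh (d i)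
  rw [NormedSpace.exp_eq_tsum ℝ]
  exact (HasSum.even_add_odd (f := fun k => (k ! : ℝ)⁻¹ • H ^ k) hasSum_even hasSum_odd).tsum_eq

section Zero

variable {R : Type*} [Zero R] (p : ℕ) {q : ℕ}

def padZero (t : Fin q → R) : Fin p → R :=
  fun i => if h : (i : ℕ) < q then t ⟨i, h⟩ else 0

def rectDiagonal (t : Fin q → R) : Matrix (Fin p) (Fin q) R :=
  of fun i j => if (i : ℕ) = j then t j else 0

theorem comp_padZero {S : Type*} [Zero S] (f : R → S) (hf : f 0 = 0) (t : Fin q → R) :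
    f ∘ padZero p t = padZero p (f ∘ t) := by
  ext i
  simp only [padZero, Function.comp_apply]
  split_ifs <;> simp [hf]

end Zero

variable {R : Type*} [Semiring R] (p : ℕ) {q : ℕ}

theorem rectDiagonal_mul_transpose (s t : Fin q → R) :
    rectDiagonal p s * (rectDiagonal p t)ᵀ = diagonal (padZero p s * padZero p t) := by
  ext i i'
  simp only [rectDiagonal, mul_apply, transpose_apply, of_apply, ite_mul, zero_mul,
    Fin.sum_ite_val_eq, diagonal_apply, padZero, Pi.mul_apply]
  by_cases hii : i = i'
  · subst hii
    by_cases hi : (i : ℕ) < q <;> simp [hi]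
  · have : (i' : ℕ) ≠ i := fun e => hii (Fin.ext e.symm)
    simp [hii, this]

theorem transpose_rectDiagonal_mul (hqp : q ≤ p) (s t : Fin q → R) :
    (rectDiagonal p s)ᵀ * rectDiagonal p t = diagonal (s * t) := by
  ext j j'
  simp only [rectDiagonal, mul_apply, transpose_apply, of_apply, ite_mul, zero_mul,
    eq_comm (a := ((_ : Fin p) : ℕ)), Fin.sum_ite_val_eq, diagonal_apply, Pi.mul_apply]
  by_cases h : j = j'
  · subst h
    simp [j.isLt.trans_le hqp]
  · simp [h, Fin.val_inj, eq_comm]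

theorem diagonal_padZero_mul_rectDiagonal (s t : Fin q → R) :
    diagonal (padZero p s) * rectDiagonal p t = rectDiagonal p (s * t) := by
  ext i j
  simp only [rectDiagonal, diagonal_mul, of_apply, padZero, Pi.mul_apply]
  by_cases h : (i : ℕ) = j <;> simp [h]

theorem diagonal_mul_transpose_rectDiagonal (s t : Fin q → R) :
    diagonal s * (rectDiagonal p t)ᵀ = (rectDiagonal p (s * t))ᵀ := by
  ext j i
  simp only [rectDiagonal, diagonal_mul, transpose_apply, of_apply, Pi.mul_apply, mul_ite,
    mul_zero]

end Matrix

namespace stmt19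

variable (p q : ℕ) (t : Fin q → ℝ)

theorem Ht_eq_fromBlocks :
    Ht p q t = fromBlocks 0 (rectDiagonal p t) (rectDiagonal p t)ᵀ 0 := by
  ext (i | j) (i' | j') <;> simp [Ht, rectDiagonal, eq_comm]

theorem Spq_eq_rectDiagonal : Spq p q t = rectDiagonal p (Real.sinh ∘ t) := rfl

theorem Cp_eq_diagonal : Cp p q t = diagonal (Real.cosh ∘ padZero p t) := by
  ext i i'
  by_cases hi : (i : ℕ) < q <;> simp [Cp, padZero, diagonal_apply, hi]

end stmt19

theorem stmt_19 (p q : ℕ) (hpq : q ≤ p) (t : Fin q → ℝ) :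
    NormedSpace.exp (stmt19.Ht p q t) =
      Matrix.fromBlocks (stmt19.Cp p q t) (stmt19.Spq p q t)
        (stmt19.Spq p q t)ᵀ (stmt19.Cq q t) := by
  let d : Fin p ⊕ Fin q → ℝ := Sum.elim (padZero p t) t
  let P : Matrix (Fin p ⊕ Fin q) (Fin p ⊕ Fin q) ℝ :=
    fromBlocks 0 (rectDiagonal p 1) (rectDiagonal p 1)ᵀ 0
  have hHt : stmt19.Ht p q t = diagonal d * P := by
    rw [stmt19.Ht_eq_fromBlocks, ← fromBlocks_diagonal, fromBlocks_multiply]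
    simp [diagonal_padZero_mul_rectDiagonal, diagonal_mul_transpose_rectDiagonal]
  have hH : stmt19.Ht p q t * stmt19.Ht p q t = diagonal (d ^ 2) := by
    rw [stmt19.Ht_eq_fromBlocks, fromBlocks_multiply]
    simp only [rectDiagonal_mul_transpose, transpose_rectDiagonal_mul p hpq, Matrix.zero_mul,
      Matrix.mul_zero, add_zero, zero_add, fromBlocks_diagonal]
    congr 1
    ext (i | j) <;> simp [d, sq]
  rw [exp_eq_diagonal_cosh_add_diagonal_sinh_mul hH hHt, Sum.comp_elim, Sum.comp_elim,
    ← fromBlocks_diagonal, ← fromBlocks_diagonal, fromBlocks_multiply, fromBlocks_add]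
  simp [stmt19.Cp_eq_diagonal, stmt19.Spq_eq_rectDiagonal, stmt19.Cq,
    comp_padZero _ _ Real.sinh_zero, diagonal_padZero_mul_rectDiagonal,
    diagonal_mul_transpose_rectDiagonal]
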